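/- For x ∈ ℕ let a'_x = (2x−1)^{−(4x−2)}, b'_x = (2x)^{−4x}, c = ∑_{x≥1} a'_x + ∑_{x≥1} b'_x, a*_x = a'_x/c, b*_x = b'_x/c, and b*₀ = 0. For x ≥ 2 define r_x = 1/((1 + b*_{x−1}/a*_x)(1 + b*_x/a*_x)) + 1/((1 + a*_x/b*_{x−1})(1 + a*_{x−1}/b*_{x−1})). Then for every x ≥ 2, r_x ≤ 1/(2(x−1)²). -/
import Mathlib


/-- a'_x = (2x−1)^{−(4x−2)}. -/
noncomputable def aSeq (x : ℕ) : ℝ := ((2 * (x : ℝ) - 1) ^ (4 * x - 2))⁻¹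

/-- b'_x = (2x)^{−4x}. -/
noncomputable def bSeq (x : ℕ) : ℝ := ((2 * (x : ℝ)) ^ (4 * x))⁻¹

/-- The normalizing constant c = ∑_{x≥1} a'_x + ∑_{x≥1} b'_x. -/
noncomputable def cNorm : ℝ := (∑' x : ℕ, aSeq (x + 1)) + (∑' x : ℕ, bSeq (x + 1))

/-- a*_x = a'_x/c. -/
noncomputable def aStar (x : ℕ) : ℝ := aSeq x / cNorm

/-- b*_x = b'_x/c for x ≥ 1, with b*₀ = 0. -/
noncomputable def bStar (x : ℕ) : ℝ := if x = 0 then 0 else bSeq x / cNorm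

/-- r_x as in the second representation. -/
noncomputable def rStar (x : ℕ) : ℝ :=
  1 / ((1 + bStar (x - 1) / aStar x) * (1 + bStar x / aStar x)) +
    1 / ((1 + aStar x / bStar (x - 1)) * (1 + aStar (x - 1) / bStar (x - 1)))

lemma aSeq_pos (x : ℕ) (hx : 1 ≤ x) : 0 < aSeq x := by
  unfold aSeq
  have h1 : (1:ℝ) ≤ (x:ℝ) := by exact_mod_cast hx
  exact inv_pos.mpr (pow_pos (by linarith) _)

lemma bSeq_pos (x : ℕ) (hx : 1 ≤ x) : 0 < bSeq x := by
  unfold bSeq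
  have h1 : (1:ℝ) ≤ (x:ℝ) := by exact_mod_cast hx
  exact inv_pos.mpr (pow_pos (by linarith) _)

lemma summable_sq : Summable (fun n : ℕ => 1 / ((n:ℝ)+1) ^ 2) := by
  have := Real.summable_one_div_nat_pow.mpr (by norm_num : 1 < 2)
  exact_mod_cast (summable_nat_add_iff 1).mpr this

lemma summable_aSeq : Summable (fun x : ℕ => aSeq (x + 1)) := by
  apply Summable.of_nonneg_of_le (fun x => (aSeq_pos _ (by omega)).le) _ summable_sq
  intro x
  unfold aSeq
  rw [one_div]
  have hb : (0:ℝ) < 2*(↑(x+1):ℝ)-1 := by push_cast; linarith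
  apply inv_anti₀ (by positivity)
  have hc : ((x:ℝ)+1) ≤ 2*(↑(x+1):ℝ)-1 := by push_cast; linarith
  calc ((x:ℝ)+1)^2 ≤ (2*(↑(x+1):ℝ)-1)^2 := pow_le_pow_left₀ (by positivity) hc 2
    _ ≤ (2*(↑(x+1):ℝ)-1)^(4*(x+1)-2) :=
        pow_le_pow_right₀ (by push_cast; linarith) (by omega)

lemma summable_bSeq : Summable (fun x : ℕ => bSeq (x + 1)) := by
  apply Summable.of_nonneg_of_le (fun x => (bSeq_pos _ (by omega)).le) _ summable_sq
  intro x
  unfold bSeq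
  rw [one_div]
  apply inv_anti₀ (by positivity)
  have hc : ((x:ℝ)+1) ≤ 2*(↑(x+1):ℝ) := by push_cast; linarith
  calc ((x:ℝ)+1)^2 ≤ (2*(↑(x+1):ℝ))^2 := pow_le_pow_left₀ (by positivity) hc 2
    _ ≤ (2*(↑(x+1):ℝ))^(4*(x+1)) :=
        pow_le_pow_right₀ (by push_cast; linarith) (by omega)

lemma cNorm_pos : 0 < cNorm := by
  unfold cNorm
  have h1 : aSeq 1 ≤ ∑' x : ℕ, aSeq (x + 1) :=
    Summable.le_tsum summable_aSeq 0 (fun i _ => (aSeq_pos _ (by omega)).le)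
  have h2 : 0 ≤ ∑' x : ℕ, bSeq (x + 1) :=
    tsum_nonneg (fun i => (bSeq_pos _ (by omega)).le)
  have h3 : aSeq 1 = 1 := by unfold aSeq; norm_num
  linarith

lemma aStar_pos (x : ℕ) (hx : 1 ≤ x) : 0 < aStar x :=
  div_pos (aSeq_pos x hx) cNorm_pos

lemma bStar_pos (x : ℕ) (hx : 1 ≤ x) : 0 < bStar x := by
  unfold bStar
  rw [if_neg (by omega)]
  exact div_pos (bSeq_pos x hx) cNorm_pos

lemma star_ratio (x y : ℕ) (hy : y ≠ 0) : aStar x / bStar y = aSeq x / bSeq y := by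
  unfold aStar bStar
  rw [if_neg hy, div_div_div_cancel_right₀]
  exact cNorm_pos.ne'

lemma star_ratio' (x y : ℕ) (hx : x ≠ 0) : bStar x / aStar y = bSeq x / aSeq y := by
  unfold aStar bStar
  rw [if_neg hx, div_div_div_cancel_right₀]
  exact cNorm_pos.ne'

lemma key1 (m : ℕ) : aSeq (m+2) / bSeq (m+1) ≤ 1 / (4 * ((m:ℝ)+1)^2) := by
  unfold aSeq bSeq
  have e1 : 4*(m+2)-2 = 4*(m+1)+2 := by omega
  rw [e1, inv_div_inv]
  have hs : (0:ℝ) < 2*(↑(m+2):ℝ)-1 := by push_cast; linarith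
  have ht : (0:ℝ) < 2*(↑(m+1):ℝ) := by push_cast; linarith
  rw [div_le_div_iff₀ (by positivity) (by positivity), one_mul]
  have h4 : 4*((m:ℝ)+1)^2 = (2*(↑(m+1):ℝ))^2 := by push_cast; ring
  rw [h4, ← pow_add]
  apply pow_le_pow_left₀ ht.le
  push_cast; linarith

lemma key2 (m : ℕ) : bSeq (m+1) / aSeq (m+1) ≤ 1 / (4 * ((m:ℝ)+1)^2) := by
  unfold aSeq bSeq
  have e1 : 4*(m+1)-2 = 4*m+2 := by omega
  have e2 : 4*(m+1) = (4*m+2)+2 := by omega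
  rw [e1, e2, inv_div_inv]
  have hs : (0:ℝ) < 2*(↑(m+1):ℝ)-1 := by push_cast; linarith
  have ht : (0:ℝ) < 2*(↑(m+1):ℝ) := by push_cast; linarith
  rw [div_le_div_iff₀ (by positivity) (by positivity), one_mul]
  have h4 : 4*((m:ℝ)+1)^2 = (2*(↑(m+1):ℝ))^2 := by push_cast; ring
  rw [h4]
  conv_rhs => rw [pow_add]
  apply mul_le_mul_of_nonneg_right _ (by positivity)
  apply pow_le_pow_left₀ hs.le
  linarith

/-- For every x ≥ 2, r_x ≤ 1/(2(x−1)²). -/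
theorem stmt17 (x : ℕ) (hx : 2 ≤ x) : rStar x ≤ 1 / (2 * ((x : ℝ) - 1) ^ 2) := by
  obtain ⟨m, rfl⟩ : ∃ m, x = m + 2 := ⟨x - 2, by omega⟩
  have hA2 : 0 < aStar (m+2) := aStar_pos _ (by omega)
  have hA1 : 0 < aStar (m+1) := aStar_pos _ (by omega)
  have hB1 : 0 < bStar (m+1) := bStar_pos _ (by omega)
  have hB2 : 0 < bStar (m+2) := bStar_pos _ (by omega)
  set k : ℝ := (m:ℝ)+1 with hk
  have hk0 : (0:ℝ) < k := by positivity
  have hK1 : aStar (m+2) / bStar (m+1) ≤ 1/(4*k^2) := by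
    rw [star_ratio _ _ (by omega)]; exact key1 m
  have hK2 : bStar (m+1) / aStar (m+1) ≤ 1/(4*k^2) := by
    rw [star_ratio' _ _ (by omega)]; exact key2 m
  have hu : 0 < bStar (m+1) / aStar (m+2) := div_pos hB1 hA2
  have hv : 0 ≤ bStar (m+2) / aStar (m+2) := (div_pos hB2 hA2).le
  have hp : 0 ≤ aStar (m+2) / bStar (m+1) := (div_pos hA2 hB1).le
  have hq : 0 < aStar (m+1) / bStar (m+1) := div_pos hA1 hB1
  have T1 : 1 / ((1 + bStar (m+1) / aStar (m+2)) * (1 + bStar (m+2) / aStar (m+2)))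
      ≤ 1/(4*k^2) := by
    have h1 : bStar (m+1) / aStar (m+2) ≤
        (1 + bStar (m+1) / aStar (m+2)) * (1 + bStar (m+2) / aStar (m+2)) := by
      nlinarith
    calc 1 / ((1 + bStar (m+1) / aStar (m+2)) * (1 + bStar (m+2) / aStar (m+2)))
        ≤ 1 / (bStar (m+1) / aStar (m+2)) := one_div_le_one_div_of_le hu h1
      _ = aStar (m+2) / bStar (m+1) := one_div_div _ _
      _ ≤ 1/(4*k^2) := hK1
  have T2 : 1 / ((1 + aStar (m+2) / bStar (m+1)) * (1 + aStar (m+1) / bStar (m+1)))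
      ≤ 1/(4*k^2) := by
    have h1 : aStar (m+1) / bStar (m+1) ≤
        (1 + aStar (m+2) / bStar (m+1)) * (1 + aStar (m+1) / bStar (m+1)) := by
      nlinarith
    calc 1 / ((1 + aStar (m+2) / bStar (m+1)) * (1 + aStar (m+1) / bStar (m+1)))
        ≤ 1 / (aStar (m+1) / bStar (m+1)) := one_div_le_one_div_of_le hq h1
      _ = bStar (m+1) / aStar (m+1) := one_div_div _ _
      _ ≤ 1/(4*k^2) := hK2
  have hsub : m + 2 - 1 = m + 1 := rfl
  have hgoal : ((↑(m+2):ℝ) - 1) = k := by push_cast; ring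
  rw [hgoal]
  unfold rStar
  rw [hsub]
  have hsum : 1/(4*k^2) + 1/(4*k^2) = 1/(2*k^2) := by
    field_simp; ring
  linarith
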